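/- Let e ≥ 4 be an integer and let u ∈ ℂ⟦X⟧ have nonzero constant coefficient. Set z = 1 + X^e · u and let z′ be its formal derivative. Then there exists g ∈ ℂ⟦X⟧ such that z²·(z − 1)³·g = (z′)⁴, and the order of g equals e − 4. -/

import Mathlib

/-!
Write `z = 1 + X^e u`. Then `z - 1 = X^e u` and `z′ = X^(e-1) w` with `w = e u + X u′`, whose
constant term `e · u(0)` is nonzero. Since `z² u³` has nonzero constant term it is invertible, and
`g = X^(e-4) w⁴ (z² u³)⁻¹` works because `3e + (e - 4) = 4(e - 1)`; being `X^(e-4)` times a unit,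
`g` has order `e - 4`.
-/

open PowerSeries

namespace PowerSeries

theorem order_X_pow_mul_of_constantCoeff_ne_zero {R : Type*} [Semiring R] {v : R⟦X⟧}
    (hv : constantCoeff v ≠ 0) (n : ℕ) : (X ^ n * v).order = (n : ℕ∞) := by
  rw [order_eq_nat]
  refine ⟨by simpa [coeff_X_pow_mul'] using hv, fun i hi => ?_⟩
  simp [coeff_X_pow_mul', hi.not_ge]

theorem derivative_X_pow_succ_mul {R : Type*} [CommSemiring R] (n : ℕ) (u : R⟦X⟧) :
    d⁄dX R (X ^ (n + 1) * u) = X ^ n * (((n + 1 : ℕ) : R⟦X⟧) * u + X * d⁄dX R u) := by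
  rw [Derivation.leibniz, Derivation.leibniz_pow, derivative_X, smul_eq_mul, nsmul_eq_mul,
    smul_eq_mul, Nat.add_sub_cancel]
  push_cast
  ring

end PowerSeries

/-- For `z = 1 + X^e · u` with `u(0) ≠ 0` and `e ≥ 4`, the series `g` with
`z²(z-1)³g = (z′)⁴` exists and has order exactly `e - 4`: the pullback of the
4-tensor `(dz/z) ⊗ (dz/(z-1))^⊗2 ⊗ (dz/(z(z-1)))` over `z = 1` is regular and nonzero. -/
theorem pullback_four_tensor_order_at_one (e : ℕ) (he : 4 ≤ e) (u : PowerSeries ℂ)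
    (hu : PowerSeries.constantCoeff u ≠ 0) :
    ∃ g : PowerSeries ℂ,
      (1 + PowerSeries.X ^ e * u) ^ 2 * ((1 + PowerSeries.X ^ e * u) - 1) ^ 3 * g =
        (PowerSeries.derivative ℂ (1 + PowerSeries.X ^ e * u)) ^ 4 ∧
      g.order = (e - 4 : ℕ) := by
  obtain ⟨m, rfl⟩ : ∃ m, e = m + 4 := ⟨e - 4, by omega⟩
  set z : ℂ⟦X⟧ := 1 + X ^ (m + 4) * u
  set w : ℂ⟦X⟧ := ((m + 4 : ℕ) : ℂ⟦X⟧) * u + X * d⁄dX ℂ u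
  have hz' : d⁄dX ℂ z = X ^ (m + 3) * w := by
    simp only [z, w, map_add, Derivation.map_one_eq_zero, zero_add]
    exact derivative_X_pow_succ_mul (m + 3) u
  have hw : constantCoeff w ≠ 0 := by
    simp only [w, map_add, map_mul, map_natCast, constantCoeff_X, zero_mul, add_zero]
    exact mul_ne_zero (Nat.cast_ne_zero.2 (by omega)) hu
  have hv : constantCoeff (z ^ 2 * u ^ 3) ≠ 0 := by simp [z, hu]
  refine ⟨X ^ m * (w ^ 4 * (z ^ 2 * u ^ 3)⁻¹), ?_, ?_⟩
  · calc z ^ 2 * (z - 1) ^ 3 * (X ^ m * (w ^ 4 * (z ^ 2 * u ^ 3)⁻¹))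
        = (X ^ (m + 3) * w) ^ 4 * ((z ^ 2 * u ^ 3) * (z ^ 2 * u ^ 3)⁻¹) := by
          simp only [z]; ring
      _ = (d⁄dX ℂ z) ^ 4 := by rw [PowerSeries.mul_inv_cancel _ hv, mul_one, hz']
  · rw [Nat.add_sub_cancel]
    refine order_X_pow_mul_of_constantCoeff_ne_zero ?_ m
    rw [map_mul, map_pow, constantCoeff_inv]
    exact mul_ne_zero (pow_ne_zero 4 hw) (inv_ne_zero hv)
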